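/- Let x be a rich infinite word. Then x is recurrent if and only if the set of factors of x is closed under reversal. -/

import Mathlib

/-- The finset of (distinct) palindromic factors of a finite word `w`,
including the empty word. -/
def palFactors {A : Type*} [DecidableEq A] (w : List A) : Finset (List A) :=
  ((w.inits.flatMap List.tails).filter (fun u => u.reverse = u)).toFinset

/-- A finite word `w` is rich if it has exactly `|w| + 1` distinct palindromic factors. -/
def Rich {A : Type*} [DecidableEq A] (w : List A) : Prop :=
  (palFactors w).card = w.length + 1

/-- A finite word `u` occurs in the infinite word `x : ℕ → A` at position `i`. -/
def OccursAt {A : Type*} (u : List A) (x : ℕ → A) (i : ℕ) : Prop :=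
  u = (List.range u.length).map fun k => x (i + k)

/-- A finite word `u` is a factor of the infinite word `x : ℕ → A` if it occurs
at some position `i` in `x`. -/
def FactorOfInf {A : Type*} (u : List A) (x : ℕ → A) : Prop :=
  ∃ i : ℕ, OccursAt u x i

/-- An infinite word is rich if all of its factors are rich. -/
def RichInf {A : Type*} [DecidableEq A] (x : ℕ → A) : Prop :=
  ∀ u : List A, FactorOfInf u x → Rich u

/-- An infinite word is recurrent if each of its factors occurs at infinitely many
positions. -/
def Recurrent {A : Type*} (x : ℕ → A) : Prop :=
  ∀ u : List A, FactorOfInf u x → ∀ N : ℕ, ∃ i : ℕ, N ≤ i ∧ OccursAt u x i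

/-!
If `x` is recurrent, the prefix `p` of length `n` reoccurs at some position `k ≥ 1`. By richness
the prefix of length `k + n` has one more palindromic factor than the prefix of length `k + n - 1`,
so it has a palindromic suffix `s` occurring nowhere earlier. Both `s` and `p` are suffixes of
that prefix, and `s` cannot be a suffix of `p` (it would then occur inside the first `p`), so `p`
is a suffix of the palindrome `s`, whence `p.reverse` is a prefix of `s`.

Conversely, if the factors are closed under reversal and `p.reverse` occurs at `i`, then the
reversal of the prefix of length `i + n + 1` starts with a letter followed by `p`, so `p` occurs
at a positive position. Shifting occurrences of a factor `u` at `i` along occurrences of the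
prefix of length `i + |u|` then yields occurrences arbitrarily far out.
-/

section

variable {A : Type*}

def factorAt (x : ℕ → A) (i n : ℕ) : List A := (List.range n).map fun k => x (i + k)

@[simp] lemma length_factorAt (x : ℕ → A) (i n : ℕ) : (factorAt x i n).length = n := by
  simp [factorAt]

lemma occursAt_iff_eq_factorAt {u : List A} {x : ℕ → A} {i : ℕ} :
    OccursAt u x i ↔ u = factorAt x i u.length := Iff.rfl

lemma occursAt_factorAt (x : ℕ → A) (i n : ℕ) : OccursAt (factorAt x i n) x i := by
  rw [occursAt_iff_eq_factorAt, length_factorAt]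

lemma factorOfInf_factorAt (x : ℕ → A) (i n : ℕ) : FactorOfInf (factorAt x i n) x :=
  ⟨i, occursAt_factorAt x i n⟩

lemma factorAt_add (x : ℕ → A) (i m n : ℕ) :
    factorAt x i (m + n) = factorAt x i m ++ factorAt x (i + m) n := by
  simp [factorAt, List.range_add, add_assoc]

lemma factorAt_succ (x : ℕ → A) (i n : ℕ) :
    factorAt x i (n + 1) = factorAt x i n ++ [x (i + n)] := by
  rw [factorAt_add]
  simp [factorAt]

lemma occursAt_append_iff {u v : List A} {x : ℕ → A} {i : ℕ} :
    OccursAt (u ++ v) x i ↔ OccursAt u x i ∧ OccursAt v x (i + u.length) := by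
  simp only [occursAt_iff_eq_factorAt, List.length_append, factorAt_add]
  exact ⟨fun h => List.append_inj h (by simp), fun ⟨hu, hv⟩ => congrArg₂ (· ++ ·) hu hv⟩

lemma OccursAt.infix {s u t : List A} {x : ℕ → A} {i : ℕ} (h : OccursAt (s ++ u ++ t) x i) :
    OccursAt u x (i + s.length) :=
  (occursAt_append_iff.1 (occursAt_append_iff.1 h).1).2

lemma FactorOfInf.of_infix {u v : List A} {x : ℕ → A} (hv : FactorOfInf v x) (huv : u <:+: v) :
    FactorOfInf u x := by
  obtain ⟨s, t, rfl⟩ := huv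
  obtain ⟨i, hi⟩ := hv
  exact ⟨_, hi.infix⟩

lemma OccursAt.factorAt_zero_eq_append {u : List A} {x : ℕ → A} {i : ℕ} (h : OccursAt u x i) :
    factorAt x 0 (i + u.length) = factorAt x 0 i ++ u := by
  rw [factorAt_add, zero_add, ← occursAt_iff_eq_factorAt.1 h]

lemma factorOfInf_iff_exists_infix_prefix {u : List A} {x : ℕ → A} :
    FactorOfInf u x ↔ ∃ n, u <:+: factorAt x 0 n := by
  constructor
  · rintro ⟨i, hi⟩
    exact ⟨i + u.length, hi.factorAt_zero_eq_append ▸ List.infix_append_right⟩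
  · rintro ⟨n, hn⟩
    exact (factorOfInf_factorAt x 0 n).of_infix hn

lemma OccursAt.of_occursAt_prefix {u : List A} {x : ℕ → A} {i k : ℕ} (hu : OccursAt u x i)
    (hk : OccursAt (factorAt x 0 (i + u.length)) x k) : OccursAt u x (k + i) := by
  rw [hu.factorAt_zero_eq_append, ← List.append_nil (_ ++ u)] at hk
  simpa using hk.infix

lemma recurrent_of_forall_exists_pos_occursAt_prefix {x : ℕ → A}
    (h : ∀ n, ∃ k, 0 < k ∧ OccursAt (factorAt x 0 n) x k) : Recurrent x := by
  intro u hu N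
  induction N with
  | zero =>
    obtain ⟨i, hi⟩ := hu
    exact ⟨i, i.zero_le, hi⟩
  | succ N ih =>
    obtain ⟨i, hNi, hi⟩ := ih
    obtain ⟨k, hk, hki⟩ := h (i + u.length)
    exact ⟨k + i, by omega, hi.of_occursAt_prefix hki⟩

lemma exists_pos_occursAt_prefix_of_reverse_closed {x : ℕ → A}
    (hcl : ∀ u : List A, FactorOfInf u x → FactorOfInf u.reverse x) (n : ℕ) :
    ∃ k, 0 < k ∧ OccursAt (factorAt x 0 n) x k := by
  obtain ⟨i, hi⟩ := hcl _ (factorOfInf_factorAt x 0 n)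
  have hpre : factorAt x 0 (i + n + 1)
      = factorAt x 0 i ++ (factorAt x 0 n).reverse ++ [x (i + n)] := by
    have := hi.factorAt_zero_eq_append
    rw [List.length_reverse, length_factorAt] at this
    rw [factorAt_succ, zero_add, this]
  obtain ⟨j, hj⟩ := hcl _ (factorOfInf_factorAt x 0 (i + n + 1))
  rw [hpre] at hj
  simp only [List.reverse_append, List.reverse_reverse, List.reverse_singleton,
    ← List.append_assoc] at hj
  exact ⟨j + 1, j.succ_pos, by simpa using hj.infix⟩

lemma mem_palFactors [DecidableEq A] {w u : List A} :
    u ∈ palFactors w ↔ u <:+: w ∧ u.reverse = u := by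
  simp only [palFactors, List.mem_toFinset, List.mem_filter, List.mem_flatMap,
    List.mem_inits, List.mem_tails, decide_eq_true_eq]
  constructor
  · rintro ⟨⟨v, hv, hu⟩, hpal⟩
    exact ⟨hu.isInfix.trans hv.isInfix, hpal⟩
  · rintro ⟨⟨s, t, rfl⟩, hpal⟩
    exact ⟨⟨s ++ u, ⟨t, rfl⟩, ⟨s, rfl⟩⟩, hpal⟩

lemma Rich.exists_palindrome_suffix_not_infix [DecidableEq A] {w : List A} {a : A}
    (hw : Rich w) (hwa : Rich (w ++ [a])) :
    ∃ s : List A, s <:+ w ++ [a] ∧ s.reverse = s ∧ ¬ s <:+: w := by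
  obtain ⟨s, hs, hsw⟩ : ∃ s ∈ palFactors (w ++ [a]), s ∉ palFactors w := by
    by_contra! h
    have := Finset.card_le_card (show palFactors (w ++ [a]) ⊆ palFactors w from h)
    rw [hw, hwa, List.length_append, List.length_singleton] at this
    omega
  rw [mem_palFactors] at hs hsw
  have hsw : ¬ s <:+: w := fun h => hsw ⟨h, hs.2⟩
  exact ⟨s, (List.infix_concat_iff.1 hs.1).resolve_right hsw, hs.2, hsw⟩

lemma RichInf.factorOfInf_reverse_prefix_of_recurrent [DecidableEq A] {x : ℕ → A}
    (hx : RichInf x) (hrec : Recurrent x) (n : ℕ) : FactorOfInf (factorAt x 0 n).reverse x := by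
  set p := factorAt x 0 n
  obtain ⟨k, hk, hpk⟩ := hrec p (factorOfInf_factorAt x 0 n) 1
  obtain ⟨m, rfl⟩ : ∃ m, k = m + 1 := ⟨k - 1, by omega⟩
  set w := factorAt x 0 (m + n)
  have hwa : factorAt x 0 (m + n + 1) = w ++ [x (m + n)] := by
    rw [factorAt_succ, zero_add]
  have hp_suffix : p <:+ w ++ [x (m + n)] := by
    have := hpk.factorAt_zero_eq_append
    rw [length_factorAt, add_right_comm, hwa] at this
    exact ⟨_, this.symm⟩
  have hp_prefix : p <+: w := by
    rw [show w = factorAt x 0 (n + m) by rw [add_comm], factorAt_add]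
    exact List.prefix_append _ _
  obtain ⟨s, hs, hpal, hsw⟩ := Rich.exists_palindrome_suffix_not_infix
    (hx w (factorOfInf_factorAt x 0 _)) (hwa ▸ hx _ (factorOfInf_factorAt x 0 _))
  have hps : p <:+ s := (List.suffix_or_suffix_of_suffix hs hp_suffix).resolve_left
    fun hsp => hsw (hsp.isInfix.trans hp_prefix.isInfix)
  have hrev : p.reverse <:+: s := hpal ▸ (List.reverse_prefix.2 hps).isInfix
  exact ((hwa ▸ factorOfInf_factorAt x 0 _).of_infix hs.isInfix).of_infix hrev

end

/-- A rich infinite word is recurrent if and only if its set of factors is closed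
under reversal. -/
theorem rich_recurrent_iff_closed_under_reversal {A : Type*} [DecidableEq A]
    (x : ℕ → A) (hx : RichInf x) :
    Recurrent x ↔ ∀ u : List A, FactorOfInf u x → FactorOfInf u.reverse x := by
  refine ⟨fun hrec u hu => ?_, fun hcl => recurrent_of_forall_exists_pos_occursAt_prefix
    (exists_pos_occursAt_prefix_of_reverse_closed hcl)⟩
  obtain ⟨n, hn⟩ := factorOfInf_iff_exists_infix_prefix.1 hu
  exact (hx.factorOfInf_reverse_prefix_of_recurrent hrec n).of_infix (List.reverse_infix.2 hn)
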